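/- Let (Ω, F, P) be a probability space, S a measurable space, ς : Ω → S a random element, and δ̂ : E × E × S → E measurable such that for fixed a, b ∈ E the map s ↦ δ̂(a, b, s) is square-integrable with mean δ(a, b) := E[δ̂(a, b, ς)] and E[‖δ̂(a, b, ς) − δ(a, b)‖²] ≤ σ². Let δ : E × E → E be continuously differentiable, let ω̄⋆ satisfy δ(ω̄⋆, ω̄) = 0, let α > 0, and suppose ‖Id − α·H̄(ω, ω̄⋆; ω̄)‖ ≤ ρ in operator norm. Then for every ω⋆ ∈ E, E[‖ω + α·δ̂(ω, ω̄, ς) − ω⋆‖] ≤ ρ·‖ω − ω̄⋆‖ + ‖ω̄⋆ − ω⋆‖ + α·σ. -/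

import Mathlib

open MeasureTheory intervalIntegral

noncomputable section

abbrev E (n : ℕ) := EuclideanSpace ℝ (Fin n)

/-- Partial Fréchet derivative of `δ` w.r.t. its first argument. -/
noncomputable def D1 {n : ℕ} (δ : E n × E n → E n) (a b : E n) : E n →L[ℝ] E n :=
  fderiv ℝ (fun x => δ (x, b)) a

/-- Path-mean Hessian `H̄(ω, ω⋆; ω̄) = −∫₀¹ D₁δ(ω − t(ω − ω⋆), ω̄) dt`. -/
noncomputable def Hbar {n : ℕ} (δ : E n × E n → E n) (ω ωs ωbar : E n) : E n →L[ℝ] E n :=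
  -∫ t in (0:ℝ)..1, D1 δ (ω - t • (ω - ωs)) ωbar

/-! Split `ω + α δ̂(ω, ω̄, ς) − ω⋆ = (Id − α H̄)(ω − ω̄⋆) + (ω̄⋆ − ω⋆) + α (δ̂(ω, ω̄, ς) − δ(ω, ω̄))`.
The fundamental theorem of calculus along the segment from `ω` to `ω̄⋆`, together with
`δ(ω̄⋆, ω̄) = 0`, identifies the first term as `ω − ω̄⋆ + α δ(ω, ω̄)`, so its norm is at most
`ρ ‖ω − ω̄⋆‖`; the expected norm of the noise term is at most `σ` because the variance of
its norm is nonnegative. -/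

theorem ContDiff.integral_fderiv_segment_apply {F G : Type*}
    [NormedAddCommGroup F] [NormedSpace ℝ F] [NormedAddCommGroup G] [NormedSpace ℝ G]
    [CompleteSpace G] {g : F → G} (hg : ContDiff ℝ 1 g) (x y : F) :
    (∫ t in (0:ℝ)..1, fderiv ℝ g (x - t • (x - y))) (x - y) = g x - g y := by
  have hpath (t : ℝ) : HasDerivAt (fun t : ℝ => x - t • (x - y)) (-(x - y)) t := by
    simpa using ((hasDerivAt_id t).smul_const (x - y)).const_sub x
  have hcont : Continuous fun t : ℝ => fderiv ℝ g (x - t • (x - y)) :=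
    (hg.continuous_fderiv one_ne_zero).comp (by fun_prop)
  have hftc : ∫ t in (0:ℝ)..1, fderiv ℝ g (x - t • (x - y)) (-(x - y)) = g y - g x := by
    simpa using integral_eq_sub_of_hasDerivAt (f := fun t => g (x - t • (x - y)))
      (fun t _ => (hg.differentiable one_ne_zero _).hasFDerivAt.comp_hasDerivAt t (hpath t))
      ((hcont.clm_apply continuous_const).intervalIntegrable 0 1)
  rw [ContinuousLinearMap.intervalIntegral_apply (hcont.intervalIntegrable 0 1), ← neg_sub (g y),
    ← hftc]
  simp only [map_neg, intervalIntegral.integral_neg, neg_neg]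

theorem Hbar_apply_sub {n : ℕ} {δ : E n × E n → E n} (hδ : ContDiff ℝ 1 δ) (ω ωs b : E n) :
    Hbar δ ω ωs b (ω - ωs) = δ (ωs, b) - δ (ω, b) := by
  have hpartial : ContDiff ℝ 1 fun x => δ (x, b) := hδ.comp (contDiff_id.prodMk contDiff_const)
  rw [Hbar, neg_apply]
  exact (congrArg Neg.neg (hpartial.integral_fderiv_segment_apply ω ωs)).trans (neg_sub _ _)

theorem id_sub_smul_Hbar_apply_sub {n : ℕ} {δ : E n × E n → E n} (hδ : ContDiff ℝ 1 δ)
    {ω ωs b : E n} (hfix : δ (ωs, b) = 0) (α : ℝ) :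
    (ContinuousLinearMap.id ℝ (E n) - α • Hbar δ ω ωs b) (ω - ωs) = ω - ωs + α • δ (ω, b) := by
  simp [Hbar_apply_sub hδ, hfix]

theorem integral_norm_le_of_integral_norm_sq_le {Ω F : Type*} [MeasurableSpace Ω]
    {μ : Measure Ω} [IsProbabilityMeasure μ] [NormedAddCommGroup F] {f : Ω → F}
    (hf : MemLp f 2 μ) {σ : ℝ} (hσ : 0 ≤ σ) (hsq : ∫ x, ‖f x‖ ^ 2 ∂μ ≤ σ ^ 2) :
    ∫ x, ‖f x‖ ∂μ ≤ σ := by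
  refine le_of_pow_le_pow_left₀ two_ne_zero hσ (le_trans ?_ hsq)
  have hvar := ProbabilityTheory.variance_nonneg (fun x => ‖f x‖) μ
  rw [ProbabilityTheory.variance_eq_sub hf.norm] at hvar
  simpa [sub_nonneg] using hvar

theorem integral_norm_add_smul_le {Ω F : Type*} [MeasurableSpace Ω]
    {μ : Measure Ω} [IsProbabilityMeasure μ] [NormedAddCommGroup F] [NormedSpace ℝ F]
    (c : F) {Y : Ω → F} (hY : Integrable Y μ) {α : ℝ} (hα : 0 ≤ α) :
    ∫ x, ‖c + α • Y x‖ ∂μ ≤ ‖c‖ + α * ∫ x, ‖Y x‖ ∂μ := by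
  have hbound (x : Ω) : ‖c + α • Y x‖ ≤ ‖c‖ + α * ‖Y x‖ := by
    simpa [norm_smul, abs_of_nonneg hα] using norm_add_le c (α • Y x)
  calc ∫ x, ‖c + α • Y x‖ ∂μ ≤ ∫ x, (‖c‖ + α * ‖Y x‖) ∂μ :=
        integral_mono_of_nonneg (.of_forall fun _ => norm_nonneg _)
          ((integrable_const _).add (hY.norm.const_mul α)) (.of_forall hbound)
    _ = ‖c‖ + α * ∫ x, ‖Y x‖ ∂μ := by
        rw [integral_add (integrable_const _) (hY.norm.const_mul α), MeasureTheory.integral_const_mul]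
        simp

theorem one_step_stochastic_bound_general {n : ℕ} {Ω S : Type*}
    [MeasurableSpace Ω] [MeasurableSpace S]
    (P : Measure Ω) [IsProbabilityMeasure P]
    (ς : Ω → S)
    (δhat : E n → E n → S → E n)
    (δ : E n × E n → E n) (hδ : ContDiff ℝ 1 δ)
    (hL2 : ∀ a b : E n, MemLp (fun x => δhat a b (ς x)) 2 P)
    (σ : ℝ) (hσ : 0 ≤ σ)
    (hvar : ∀ a b : E n, ∫ x, ‖δhat a b (ς x) - δ (a, b)‖ ^ 2 ∂P ≤ σ ^ 2)
    (ωbar ωbars : E n) (hfit : δ (ωbars, ωbar) = 0)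
    (α : ℝ) (hα : 0 < α)
    (ω : E n) (ρ : ℝ)
    (hop : ‖ContinuousLinearMap.id ℝ (E n) - α • Hbar δ ω ωbars ωbar‖ ≤ ρ) :
    ∀ ωs : E n,
      ∫ x, ‖ω + α • δhat ω ωbar (ς x) - ωs‖ ∂P ≤
        ρ * ‖ω - ωbars‖ + ‖ωbars - ωs‖ + α * σ := by
  intro ωs
  set noise := fun x => δhat ω ωbar (ς x) - δ (ω, ωbar)
  have hnoise : MemLp noise 2 P := (hL2 ω ωbar).sub (memLp_const _)
  have hcontract : ‖ω - ωbars + α • δ (ω, ωbar)‖ ≤ ρ * ‖ω - ωbars‖ := by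
    rw [← id_sub_smul_Hbar_apply_sub hδ hfit]
    exact (ContinuousLinearMap.le_opNorm _ _).trans (by gcongr)
  have hsplit (x : Ω) : ω + α • δhat ω ωbar (ς x) - ωs =
      (ω - ωbars + α • δ (ω, ωbar) + (ωbars - ωs)) + α • noise x := by
    simp only [noise, smul_sub]
    abel
  calc ∫ x, ‖ω + α • δhat ω ωbar (ς x) - ωs‖ ∂P
      = ∫ x, ‖(ω - ωbars + α • δ (ω, ωbar) + (ωbars - ωs)) + α • noise x‖ ∂P := by
        simp_rw [hsplit]
    _ ≤ ‖ω - ωbars + α • δ (ω, ωbar) + (ωbars - ωs)‖ + α * ∫ x, ‖noise x‖ ∂P :=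
        integral_norm_add_smul_le _ (hnoise.integrable one_le_two) hα.le
    _ ≤ ρ * ‖ω - ωbars‖ + ‖ωbars - ωs‖ + α * σ := by
        gcongr
        · exact norm_add_le_of_le hcontract le_rfl
        · exact integral_norm_le_of_integral_norm_sq_le hnoise hσ (hvar ω ωbar)

/-- Lemma B.4 of the paper, the one-step stochastic PFPE bound:
with `δ(a,b) = E[δ̂(a, b, ς)]`, variance bounded by `σ²`, `δ(ω̄⋆, ω̄) = 0`, and
`‖Id − α·H̄(ω, ω̄⋆; ω̄)‖ ≤ ρ`, we have for every `ω⋆`,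
`E[‖ω + α·δ̂(ω, ω̄, ς) − ω⋆‖] ≤ ρ·‖ω − ω̄⋆‖ + ‖ω̄⋆ − ω⋆‖ + α·σ`. -/
theorem one_step_stochastic_bound {n : ℕ} {Ω S : Type*}
    [MeasurableSpace Ω] [MeasurableSpace S]
    (P : Measure Ω) [IsProbabilityMeasure P]
    (ς : Ω → S) (hς : Measurable ς)
    (δhat : E n → E n → S → E n)
    (δ : E n × E n → E n) (hδ : ContDiff ℝ 1 δ)
    (hL2 : ∀ a b : E n, MemLp (fun x => δhat a b (ς x)) 2 P)
    (hmean : ∀ a b : E n, δ (a, b) = ∫ x, δhat a b (ς x) ∂P)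
    (σ : ℝ) (hσ : 0 ≤ σ)
    (hvar : ∀ a b : E n, ∫ x, ‖δhat a b (ς x) - δ (a, b)‖ ^ 2 ∂P ≤ σ ^ 2)
    (ωbar ωbars : E n) (hfit : δ (ωbars, ωbar) = 0)
    (α : ℝ) (hα : 0 < α)
    (ω : E n) (ρ : ℝ)
    (hop : ‖ContinuousLinearMap.id ℝ (E n) - α • Hbar δ ω ωbars ωbar‖ ≤ ρ) :
    ∀ ωs : E n,
      ∫ x, ‖ω + α • δhat ω ωbar (ς x) - ωs‖ ∂P ≤
        ρ * ‖ω - ωbars‖ + ‖ωbars - ωs‖ + α * σ :=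
  one_step_stochastic_bound_general P ς δhat δ hδ hL2 σ hσ hvar ωbar ωbars hfit α hα ω ρ hop

end
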